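/- Soundness of universal substitution (rule 5): if M ⊨_X ∀x A, and y does not occur free in ∀x A, then M ⊨_{X(M/y)} A(y/x). Consequently, if B follows semantically from A(y/x) together with side assumptions in which y does not occur free and which hold in X, then M ⊨_X ∀y B. -/

import Mathlib

open FirstOrder Language

/-- Formulas of independence logic over a first-order language `L`, with variables `ℕ`:
first-order formulas, conditional independence atoms `t1 ⊥_{t3} t2` (written
`indep t1 t2 t3`) between tuples (lists) of terms, conjunction, disjunction, and
existential and universal quantification. -/
inductive TeamFormula (L : Language) : Type _ where
  | fo (φ : L.Formula ℕ)
  | indep (t1 t2 t3 : List (L.Term ℕ))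
  | and (φ ψ : TeamFormula L)
  | or (φ ψ : TeamFormula L)
  | ex (x : ℕ) (φ : TeamFormula L)
  | all (x : ℕ) (φ : TeamFormula L)

namespace TeamFormula

variable {L : Language}

/-- The set of free variables of an independence-logic formula. -/
def Fr : TeamFormula L → Set ℕ
  | .fo φ => ↑φ.freeVarFinset
  | .indep t1 t2 t3 => ↑((t1 ++ t2 ++ t3).foldr (fun t s => t.varFinset ∪ s) ∅)
  | .and φ ψ => φ.Fr ∪ ψ.Fr
  | .or φ ψ => φ.Fr ∪ ψ.Fr
  | .ex x φ => φ.Fr \ {x}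
  | .all x φ => φ.Fr \ {x}

/-- A team is a set of assignments. -/
abbrev Team (M : Type*) := Set (ℕ → M)

/-- The value of a tuple (list) of terms under an assignment. -/
def listVal {M : Type*} [L.Structure M] (ts : List (L.Term ℕ)) (s : ℕ → M) : List M :=
  ts.map fun t => t.realize s

/-- Lax team semantics for independence logic.  First-order formulas are evaluated
pointwise; disjunction splits the team into a union; `∃x φ` is witnessed by a function
`F` from the team to nonempty sets of elements, extending the team to
`X(F/x) = {s(a/x) : s ∈ X, a ∈ F s}`; `∀x φ` duplicates the team to `X(M/x)`. -/
def Sat (M : Type*) [L.Structure M] : TeamFormula L → Team M → Prop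
  | .fo φ, X => ∀ s ∈ X, φ.Realize s
  | .indep t1 t2 t3, X => ∀ s ∈ X, ∀ s' ∈ X, listVal t3 s = listVal t3 s' →
      ∃ s'' ∈ X, listVal t1 s'' = listVal t1 s ∧ listVal t3 s'' = listVal t3 s ∧
        listVal t2 s'' = listVal t2 s'
  | .and φ ψ, X => φ.Sat M X ∧ ψ.Sat M X
  | .or φ ψ, X => ∃ Y Z : Team M, Y ∪ Z = X ∧ φ.Sat M Y ∧ ψ.Sat M Z
  | .ex x φ, X => ∃ F : (ℕ → M) → Set M, (∀ s ∈ X, (F s).Nonempty) ∧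
      φ.Sat M {s' | ∃ s ∈ X, ∃ a ∈ F s, s' = Function.update s x a}
  | .all x φ, X => φ.Sat M {s' | ∃ s ∈ X, ∃ a : M, s' = Function.update s x a}

end TeamFormula

open FirstOrder Language

namespace TeamFormula

variable {L : Language}

/-- Substitution of variables for (free occurrences of) variables in an
independence-logic formula: apply `σ` to the free variables, keeping bound variables
fixed (capture is avoided by a separate side condition on `boundVars`). -/
def subst (σ : ℕ → ℕ) : TeamFormula L → TeamFormula L
  | .fo φ => .fo (φ.relabel σ)
  | .indep t1 t2 t3 =>
      .indep (t1.map (Term.relabel σ)) (t2.map (Term.relabel σ)) (t3.map (Term.relabel σ))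
  | .and φ ψ => .and (φ.subst σ) (ψ.subst σ)
  | .or φ ψ => .or (φ.subst σ) (ψ.subst σ)
  | .ex x φ => .ex x (φ.subst (Function.update σ x x))
  | .all x φ => .all x (φ.subst (Function.update σ x x))

/-- The set of (quantifier-)bound variables of an independence-logic formula. -/
def boundVars : TeamFormula L → Set ℕ
  | .fo _ => ∅
  | .indep _ _ _ => ∅
  | .and φ ψ => φ.boundVars ∪ ψ.boundVars
  | .or φ ψ => φ.boundVars ∪ ψ.boundVars
  | .ex x φ => insert x φ.boundVars
  | .all x φ => insert x φ.boundVars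

end TeamFormula

/-- The duplicated team `X(M/y) = {s(a/y) : s ∈ X, a ∈ M}`. -/
def dupTeam {M : Type*} (X : TeamFormula.Team M) (y : ℕ) : TeamFormula.Team M :=
  {s' | ∃ s ∈ X, ∃ a : M, s' = Function.update s y a}

/-!
Two properties of lax team semantics carry the argument. Locality: whether `φ` holds in a team
depends only on the restrictions of its assignments to any set containing the free variables
of `φ`. Substitution: `φ(σ)` holds in `X` iff `φ` holds in `{s ∘ σ : s ∈ X}`, as long as `σ`
moves no variable onto a bound variable of `φ`. On the free variables of `A`, the assignment
`s(a/y) ∘ σ` agrees with `s(a/x)` because `y` is not free in `∀x A`; so `X(M/x) ⊨ A` gives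
`X(M/y) ⊨ A(y/x)`. By locality the side assumptions, in which `y` is not free, pass from `X`
to `X(M/y)`, where they yield `B`.
-/

open Set Function

theorem Set.exists_union_eq_and_image_eq {α β : Type*} {f : α → β} {s : Set α} {t₁ t₂ : Set β}
    (h : t₁ ∪ t₂ = f '' s) : ∃ s₁ s₂, s₁ ∪ s₂ = s ∧ f '' s₁ = t₁ ∧ f '' s₂ = t₂ := by
  refine ⟨s ∩ f ⁻¹' t₁, s ∩ f ⁻¹' t₂, ?_, ?_, ?_⟩
  · rw [← inter_union_distrib_left, ← preimage_union, h]
    exact inter_eq_left.mpr (subset_preimage_image f s)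
  · rw [image_inter_preimage, ← h, inter_eq_right.mpr subset_union_left]
  · rw [image_inter_preimage, ← h, inter_eq_right.mpr subset_union_right]

theorem Set.domRestrict_image_subset_domRestrict_image_iff {α β : Type*} {V : Set α}
    {X Y : Set (α → β)} :
    V.domRestrict '' X ⊆ V.domRestrict '' Y ↔ ∀ s ∈ X, ∃ t ∈ Y, EqOn s t V := by
  constructor
  · intro h s hs
    obtain ⟨t, ht, hts⟩ := h (mem_image_of_mem _ hs)
    exact ⟨t, ht, (domRestrict_eq_domRestrict_iff.mp hts).symm⟩
  · rintro h _ ⟨s, hs, rfl⟩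
    obtain ⟨t, ht, hst⟩ := h s hs
    exact ⟨t, ht, domRestrict_eq_domRestrict_iff.mpr hst.symm⟩

theorem Set.image_subset_image_of_domRestrict_image_subset {α β γ : Type*} {V : Set α}
    {X Y : Set (α → β)} {g : (α → β) → γ} (hg : ∀ s t, EqOn s t V → g s = g t)
    (h : V.domRestrict '' X ⊆ V.domRestrict '' Y) : g '' X ⊆ g '' Y := by
  rintro _ ⟨s, hs, rfl⟩
  obtain ⟨t, ht, hst⟩ := domRestrict_image_subset_domRestrict_image_iff.mp h s hs
  exact ⟨t, ht, (hg s t hst).symm⟩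

theorem Set.EqOn.update {α β : Type*} [DecidableEq α] {s t : α → β} {V : Set α} (h : EqOn s t V)
    (z : α) (a : β) : EqOn (update s z a) (update t z a) (insert z V) := by
  rintro v (rfl | hv)
  · simp
  · by_cases hvz : v = z
    · simp [hvz]
    · simp [hvz, h hv]

namespace FirstOrder.Language

variable {L : Language} {M α : Type*} [L.Structure M] [DecidableEq α]

theorem Term.realize_congr {t : L.Term α} {v w : α → M} (h : EqOn v w t.varFinset) :
    t.realize v = t.realize w := by
  have hvw : v ∘ ((↑) : ↥(↑t.varFinset : Set α) → α) = w ∘ (↑) := funext fun a => h a.2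
  rw [← realize_restrictVar' subset_rfl, hvw, realize_restrictVar']

theorem Formula.realize_congr {φ : L.Formula α} {v w : α → M} (h : EqOn v w φ.freeVarFinset) :
    φ.Realize v ↔ φ.Realize w := by
  have hvw : v ∘ ((↑) : ↥(↑φ.freeVarFinset : Set α) → α) = w ∘ (↑) := funext fun a => h a.2
  rw [Formula.Realize, ← BoundedFormula.realize_restrictFreeVar' subset_rfl, hvw,
    BoundedFormula.realize_restrictFreeVar']
  rfl

end FirstOrder.Language

namespace TeamFormula

variable {L : Language} {M : Type*} [L.Structure M]

/-- The team `X(F/x)` of the existential clause of `Sat`. -/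
def supplement (X : Team M) (x : ℕ) (F : (ℕ → M) → Set M) : Team M :=
  {s' | ∃ s ∈ X, ∃ a ∈ F s, s' = update s x a}

theorem dupTeam_eq_supplement (X : Team M) (x : ℕ) :
    dupTeam X x = supplement X x fun _ => univ := by
  simp [dupTeam, supplement]

theorem sat_ex_iff {x : ℕ} {φ : TeamFormula L} {X : Team M} :
    (ex x φ).Sat M X ↔
      ∃ F : (ℕ → M) → Set M, (∀ s ∈ X, (F s).Nonempty) ∧ φ.Sat M (supplement X x F) :=
  Iff.rfl

theorem sat_all_iff {x : ℕ} {φ : TeamFormula L} {X : Team M} :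
    (all x φ).Sat M X ↔ φ.Sat M (dupTeam X x) :=
  Iff.rfl

def atomValues (t₁ t₂ t₃ : List (L.Term ℕ)) (s : ℕ → M) : List M × List M × List M :=
  (listVal t₁ s, listVal t₂ s, listVal t₃ s)

/-- The independence atom `t₁ ⊥_{t₃} t₂`, read on the set of value triples of a team. -/
def IsIndepRel {A B C : Type*} (R : Set (A × B × C)) : Prop :=
  ∀ p ∈ R, ∀ q ∈ R, p.2.2 = q.2.2 → ∃ r ∈ R, r.1 = p.1 ∧ r.2.2 = p.2.2 ∧ r.2.1 = q.2.1

theorem sat_indep_iff {t₁ t₂ t₃ : List (L.Term ℕ)} {X : Team M} :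
    (indep t₁ t₂ t₃).Sat M X ↔ IsIndepRel (atomValues t₁ t₂ t₃ '' X) := by
  simp only [Sat, IsIndepRel, forall_mem_image, exists_mem_image, atomValues]

theorem Fr_indep (t₁ t₂ t₃ : List (L.Term ℕ)) :
    (indep t₁ t₂ t₃).Fr = ⋃ t ∈ t₁ ++ t₂ ++ t₃, (t.varFinset : Set ℕ) := by
  simp only [Fr]
  induction t₁ ++ t₂ ++ t₃ <;> simp_all

theorem varFinset_subset_Fr_indep {t₁ t₂ t₃ : List (L.Term ℕ)} {u : L.Term ℕ}
    (hu : u ∈ t₁ ++ t₂ ++ t₃) : ↑u.varFinset ⊆ (indep t₁ t₂ t₃).Fr := by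
  rw [Fr_indep]
  exact subset_iUnion₂_of_subset u hu subset_rfl

theorem atomValues_congr {t₁ t₂ t₃ : List (L.Term ℕ)} {s t : ℕ → M}
    (h : EqOn s t (indep t₁ t₂ t₃).Fr) : atomValues t₁ t₂ t₃ s = atomValues t₁ t₂ t₃ t := by
  have hval : ∀ ts : List (L.Term ℕ), (∀ u ∈ ts, u ∈ t₁ ++ t₂ ++ t₃) →
      listVal ts s = listVal ts t := fun ts hts => List.map_congr_left fun u hu =>
    Term.realize_congr (h.mono (varFinset_subset_Fr_indep (hts u hu)))
  simp only [atomValues, hval t₁ (by simp_all), hval t₂ (by simp_all), hval t₃ (by simp_all)]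

theorem domRestrict_image_supplement_subset {V : Set ℕ} {X Y : Team M}
    {F G : (ℕ → M) → Set M} (z : ℕ) (h : ∀ s ∈ X, ∀ a ∈ F s, ∃ t ∈ Y, EqOn s t V ∧ a ∈ G t) :
    (insert z V).domRestrict '' supplement X z F ⊆
      (insert z V).domRestrict '' supplement Y z G := by
  rw [domRestrict_image_subset_domRestrict_image_iff]
  rintro _ ⟨s, hs, a, ha, rfl⟩
  obtain ⟨t, ht, hst, hat⟩ := h s hs a ha
  exact ⟨_, ⟨t, ht, a, hat, rfl⟩, hst.update z a⟩

theorem sat_of_domRestrict_image_eq (φ : TeamFormula L) {V : Set ℕ} (hV : φ.Fr ⊆ V)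
    {X Y : Team M} (hXY : V.domRestrict '' X = V.domRestrict '' Y) (h : φ.Sat M X) :
    φ.Sat M Y := by
  induction φ generalizing V X Y with
  | fo ψ =>
    intro t ht
    obtain ⟨s, hs, hts⟩ := domRestrict_image_subset_domRestrict_image_iff.mp hXY.ge t ht
    exact (Formula.realize_congr (hts.mono hV)).mpr (h s hs)
  | indep t₁ t₂ t₃ =>
    have hval : ∀ s t : ℕ → M, EqOn s t V → atomValues t₁ t₂ t₃ s = atomValues t₁ t₂ t₃ t :=
      fun s t hst => atomValues_congr (hst.mono hV)
    rw [sat_indep_iff] at h ⊢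
    rwa [← (image_subset_image_of_domRestrict_image_subset hval hXY.le).antisymm
      (image_subset_image_of_domRestrict_image_subset hval hXY.ge)]
  | and φ ψ ihφ ihψ =>
    exact ⟨ihφ (subset_union_left.trans hV) hXY h.1,
      ihψ (subset_union_right.trans hV) hXY h.2⟩
  | or φ ψ ihφ ihψ =>
    obtain ⟨X₁, X₂, rfl, h₁, h₂⟩ := h
    rw [image_union] at hXY
    obtain ⟨Y₁, Y₂, rfl, hXY₁, hXY₂⟩ := exists_union_eq_and_image_eq hXY
    exact ⟨Y₁, Y₂, rfl, ihφ (subset_union_left.trans hV) hXY₁.symm h₁,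
      ihψ (subset_union_right.trans hV) hXY₂.symm h₂⟩
  | ex z φ ih =>
    have hX := domRestrict_image_subset_domRestrict_image_iff.mp hXY.le
    have hY := domRestrict_image_subset_domRestrict_image_iff.mp hXY.ge
    obtain ⟨F, hF, hφ⟩ := h
    refine ⟨fun t => {a | ∃ s ∈ X, EqOn s t V ∧ a ∈ F s}, fun t ht => ?_,
      ih (sdiff_singleton_subset_iff.mp hV) ?_ hφ⟩
    · obtain ⟨s, hs, hts⟩ := hY t ht
      obtain ⟨a, ha⟩ := hF s hs
      exact ⟨a, s, hs, hts.symm, ha⟩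
    · refine (domRestrict_image_supplement_subset z fun s hs a ha => ?_).antisymm
        (domRestrict_image_supplement_subset z ?_)
      · obtain ⟨t, ht, hst⟩ := hX s hs
        exact ⟨t, ht, hst, s, hs, hst, ha⟩
      · rintro t ht a ⟨s, hs, hst, ha⟩
        exact ⟨s, hs, hst.symm, ha⟩
  | all z φ ih =>
    have hX := domRestrict_image_subset_domRestrict_image_iff.mp hXY.le
    have hY := domRestrict_image_subset_domRestrict_image_iff.mp hXY.ge
    rw [sat_all_iff, dupTeam_eq_supplement] at h ⊢
    refine ih (sdiff_singleton_subset_iff.mp hV) ?_ h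
    refine (domRestrict_image_supplement_subset z fun s hs a _ => ?_).antisymm
        (domRestrict_image_supplement_subset z fun t ht a _ => ?_)
    · obtain ⟨t, ht, hst⟩ := hX s hs
      exact ⟨t, ht, hst, mem_univ a⟩
    · obtain ⟨s, hs, hts⟩ := hY t ht
      exact ⟨s, hs, hts, mem_univ a⟩

theorem domRestrict_image_dupTeam {V : Set ℕ} {y : ℕ} (hy : y ∉ V) (X : Team M) :
    V.domRestrict '' dupTeam X y = V.domRestrict '' X := by
  refine Subset.antisymm ?_ ?_ <;> rw [domRestrict_image_subset_domRestrict_image_iff]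
  · rintro _ ⟨s, hs, a, rfl⟩
    exact ⟨s, hs, fun v hv => update_of_ne (ne_of_mem_of_not_mem hv hy) a s⟩
  · exact fun s hs => ⟨s, ⟨s, hs, s y, (update_eq_self y s).symm⟩, eqOn_refl s V⟩

theorem sat_dupTeam_of_notMem_Fr {φ : TeamFormula L} {y : ℕ} (hy : y ∉ φ.Fr) {X : Team M}
    (h : φ.Sat M X) : φ.Sat M (dupTeam X y) :=
  sat_of_domRestrict_image_eq φ subset_rfl (domRestrict_image_dupTeam hy X).symm h

def AvoidsCapture (σ : ℕ → ℕ) (B : Set ℕ) : Prop :=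
  ∀ v, σ v ∈ B → σ v = v

theorem AvoidsCapture.mono {σ : ℕ → ℕ} {B C : Set ℕ} (h : AvoidsCapture σ C) (hBC : B ⊆ C) :
    AvoidsCapture σ B :=
  fun v hv => h v (hBC hv)

theorem AvoidsCapture.update {σ : ℕ → ℕ} {z : ℕ} {B : Set ℕ} (h : AvoidsCapture σ (insert z B)) :
    AvoidsCapture (update σ z z) B := by
  intro v hv
  by_cases hvz : v = z
  · simp [hvz]
  · rw [update_of_ne hvz] at hv ⊢
    exact h v (mem_insert_of_mem z hv)

theorem update_comp_update_self {σ : ℕ → ℕ} {z : ℕ} (hz : AvoidsCapture σ {z}) (s : ℕ → M)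
    (a : M) : update s z a ∘ update σ z z = update (s ∘ σ) z a := by
  funext v
  by_cases hvz : v = z
  · simp [hvz]
  · have hσv : σ v ≠ z := fun h => hvz ((hz v h).symm.trans h)
    simp [hvz, hσv]

theorem image_comp_supplement {σ : ℕ → ℕ} {z : ℕ} (hz : AvoidsCapture σ {z}) {X : Team M}
    {F G : (ℕ → M) → Set M}
    (hFG : ∀ s ∈ X, ∀ a, a ∈ G (s ∘ σ) ↔ ∃ s' ∈ X, s' ∘ σ = s ∘ σ ∧ a ∈ F s') :
    (· ∘ update σ z z) '' supplement X z F = supplement ((· ∘ σ) '' X) z G := by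
  ext t
  constructor
  · rintro ⟨_, ⟨s, hs, a, ha, rfl⟩, rfl⟩
    exact ⟨s ∘ σ, ⟨s, hs, rfl⟩, a, (hFG s hs a).2 ⟨s, hs, rfl, ha⟩, update_comp_update_self hz s a⟩
  · rintro ⟨_, ⟨s, hs, rfl⟩, a, ha, rfl⟩
    obtain ⟨s', hs', hss', ha'⟩ := (hFG s hs a).1 ha
    refine ⟨update s' z a, ⟨s', hs', a, ha', rfl⟩, ?_⟩
    exact (update_comp_update_self hz s' a).trans (by rw [hss'])

theorem atomValues_relabel (σ : ℕ → ℕ) (t₁ t₂ t₃ : List (L.Term ℕ)) (s : ℕ → M) :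
    atomValues (t₁.map (Term.relabel σ)) (t₂.map (Term.relabel σ)) (t₃.map (Term.relabel σ)) s =
      atomValues t₁ t₂ t₃ (s ∘ σ) := by
  simp [atomValues, listVal, Term.realize_relabel]

theorem sat_subst (φ : TeamFormula L) {σ : ℕ → ℕ} (hσ : AvoidsCapture σ φ.boundVars)
    (X : Team M) : (φ.subst σ).Sat M X ↔ φ.Sat M ((· ∘ σ) '' X) := by
  induction φ generalizing σ X with
  | fo ψ => simp only [subst, Sat, forall_mem_image, Formula.realize_relabel]
  | indep t₁ t₂ t₃ =>
    simp only [subst, sat_indep_iff, image_image, atomValues_relabel]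
  | and φ ψ ihφ ihψ =>
    exact and_congr (ihφ (hσ.mono subset_union_left) X) (ihψ (hσ.mono subset_union_right) X)
  | or φ ψ ihφ ihψ =>
    simp only [subst, Sat, ihφ (hσ.mono subset_union_left), ihψ (hσ.mono subset_union_right)]
    constructor
    · rintro ⟨Y, Z, rfl, hY, hZ⟩
      exact ⟨_, _, (image_union _ Y Z).symm, hY, hZ⟩
    · rintro ⟨Y', Z', hYZ, hY', hZ'⟩
      obtain ⟨Y, Z, rfl, rfl, rfl⟩ := exists_union_eq_and_image_eq hYZ
      exact ⟨Y, Z, rfl, hY', hZ'⟩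
  | ex z φ ih =>
    have hz : AvoidsCapture σ {z} := hσ.mono (singleton_subset_iff.mpr (mem_insert z _))
    rw [subst, sat_ex_iff, sat_ex_iff]
    simp only [ih hσ.update]
    constructor
    · rintro ⟨F, hF, hφ⟩
      refine ⟨fun t => {a | ∃ s ∈ X, s ∘ σ = t ∧ a ∈ F s}, ?_, ?_⟩
      · rintro _ ⟨s, hs, rfl⟩
        obtain ⟨a, ha⟩ := hF s hs
        exact ⟨a, s, hs, rfl, ha⟩
      · rwa [← image_comp_supplement hz fun s _ a => Iff.rfl]
    · rintro ⟨G, hG, hφ⟩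
      refine ⟨fun s => G (s ∘ σ), fun s hs => hG _ ⟨s, hs, rfl⟩, ?_⟩
      rwa [image_comp_supplement hz fun s hs a => ⟨fun ha => ⟨s, hs, rfl, ha⟩, ?_⟩]
      rintro ⟨s', _, hss', ha⟩
      rwa [← hss']
  | all z φ ih =>
    have hz : AvoidsCapture σ {z} := hσ.mono (singleton_subset_iff.mpr (mem_insert z _))
    rw [subst, sat_all_iff, sat_all_iff, ih hσ.update, dupTeam_eq_supplement,
      dupTeam_eq_supplement, image_comp_supplement hz fun s hs a => ?_]
    simpa using ⟨s, hs, rfl⟩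

theorem eqOn_update_comp {σ : ℕ → ℕ} {x y : ℕ} (hσx : σ x = y) (hσ : ∀ v, v ≠ x → σ v = v)
    {V : Set ℕ} (hy : y ∉ V \ {x}) (s : ℕ → M) (a : M) :
    EqOn (update s y a ∘ σ) (update s x a) V := by
  intro v hv
  by_cases hvx : v = x
  · simp [hvx, hσx]
  · have hvy : v ≠ y := fun h => hy ⟨h ▸ hv, fun hyx => hvx (h.trans hyx)⟩
    simp [hσ v hvx, hvx, hvy]

theorem domRestrict_image_comp_dupTeam {σ : ℕ → ℕ} {x y : ℕ} (hσx : σ x = y)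
    (hσ : ∀ v, v ≠ x → σ v = v) {V : Set ℕ} (hy : y ∉ V \ {x}) (X : Team M) :
    V.domRestrict '' ((· ∘ σ) '' dupTeam X y) = V.domRestrict '' dupTeam X x := by
  refine Subset.antisymm ?_ ?_ <;> rw [domRestrict_image_subset_domRestrict_image_iff]
  · rintro _ ⟨_, ⟨s, hs, a, rfl⟩, rfl⟩
    exact ⟨_, ⟨s, hs, a, rfl⟩, eqOn_update_comp hσx hσ hy s a⟩
  · rintro _ ⟨s, hs, a, rfl⟩
    exact ⟨_, ⟨_, ⟨s, hs, a, rfl⟩, rfl⟩, (eqOn_update_comp hσx hσ hy s a).symm⟩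

end TeamFormula

/-- soundness of universal substitution (rule 5).  If `M ⊨_X ∀x A` and `y`
does not occur free in `∀x A` (nor becomes bound in the substitution), then
`M ⊨_{X(M/y)} A(y/x)`.  Consequently, if `B` follows semantically from `A(y/x)` together
with side assumptions `T` in which `y` does not occur free and which hold in `X`, then
`M ⊨_X ∀y B`. -/
theorem TeamFormula.universal_substitution_sound {L : FirstOrder.Language} {M : Type*}
    [L.Structure M] (A B : TeamFormula L) (x y : ℕ)
    (σ : ℕ → ℕ) (hσ : σ x = y) (hσ' : ∀ v, v ≠ x → σ v = v)
    (hyFr : y ∉ (TeamFormula.all x A).Fr) (hyBound : y ∉ A.boundVars)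
    (T : Set (TeamFormula L))
    (X : TeamFormula.Team M)
    (hA : (TeamFormula.all x A).Sat M X)
    (hT : ∀ C ∈ T, y ∉ C.Fr ∧ C.Sat M X)
    (hcons : ∀ Y : TeamFormula.Team M,
      (A.subst σ).Sat M Y → (∀ C ∈ T, C.Sat M Y) → B.Sat M Y) :
    (A.subst σ).Sat M (dupTeam X y) ∧ (TeamFormula.all y B).Sat M X := by
  have hcap : AvoidsCapture σ A.boundVars := by
    intro v hv
    by_cases hvx : v = x
    · rw [hvx, hσ] at hv
      exact absurd hv hyBound
    · exact hσ' v hvx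
  have hAy : (A.subst σ).Sat M (dupTeam X y) := by
    rw [sat_subst A hcap]
    exact sat_of_domRestrict_image_eq A subset_rfl
      (domRestrict_image_comp_dupTeam hσ hσ' hyFr X).symm hA
  exact ⟨hAy, hcons _ hAy fun C hC => sat_dupTeam_of_notMem_Fr (hT C hC).1 (hT C hC).2⟩
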